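/- arXiv:1503.02492 — 3 statements merged into one kernel-verified Lean document; each statement's English description precedes it below -/
import Mathlib

section
/- Assume r, B, C > 0, D ≥ 0 and rB - D > 0. Set h*_n = (rBn - D)/C for n ≥ 1 and δ = C·h*_1 / 2 (any δ with 0 < δ < C·h*_1 works). Then for every n ≥ 1, every h ≥ h*_1, and every t ≥ 0, the solution φ_n(h,t) of y' = y(rBn - D - Cy), y(0) = h, satisfies |φ_n(h,t) - h*_n| ≤ |h - h*_n|·e^{-δ t}. -/
/-! The flow is explicit: writing `a = rBn - D` and `Q = 1 + (hC/a)(e^{ta} - 1)`, one has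
`φ_n(h,t) - h*_n = (h - h*_n)/Q`. Since `h ≥ h*_1`, the denominator satisfies
`Q ≥ 1 + (b/a)(e^{ta} - 1)` with `b = rB - D = C·h*_1 ≤ a`, and convexity of `exp` bounds this
from below by `e^{bt}`, which beats the rate `e^{bt/2}` claimed. -/

noncomputable def phi (r B C D : ℝ) (n : ℕ) (h t : ℝ) : ℝ :=
  h * Real.exp (t * (r * B * n - D)) /
    (1 + h * C / (r * B * n - D) * (Real.exp (t * (r * B * n - D)) - 1))

/-- The equilibrium `h*_n = (rBn - D)/C`. -/
noncomputable def hstar (r B C D : ℝ) (n : ℕ) : ℝ := (r * B * n - D) / C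

open Real

/-- The solution of `y' = y (a - c y)`, `y(0) = h`. -/
noncomputable def logisticFlow (a c h t : ℝ) : ℝ :=
  h * exp (t * a) / (1 + h * c / a * (exp (t * a) - 1))

lemma phi_eq_logisticFlow (r B C D : ℝ) (n : ℕ) :
    phi r B C D n = logisticFlow (r * B * n - D) C := rfl

lemma exp_mul_le_one_add_mul_exp_sub_one {θ : ℝ} (hθ₀ : 0 ≤ θ) (hθ₁ : θ ≤ 1) (x : ℝ) :
    exp (θ * x) ≤ 1 + θ * (exp x - 1) := by
  have := convexOn_exp.2 (Set.mem_univ 0) (Set.mem_univ x) (sub_nonneg.2 hθ₁) hθ₀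
    (sub_add_cancel 1 θ)
  simp only [smul_eq_mul, mul_zero, zero_add, exp_zero, mul_one] at this
  linarith

lemma exp_mul_le_one_add_div_mul_exp_sub_one {a b k t : ℝ} (hb : 0 < b) (hba : b ≤ a)
    (hbk : b ≤ k) (ht : 0 ≤ t) :
    exp (b * t) ≤ 1 + k / a * (exp (t * a) - 1) := by
  have ha : 0 < a := hb.trans_le hba
  have hexp : 0 ≤ exp (t * a) - 1 := sub_nonneg.2 (one_le_exp (by positivity))
  calc exp (b * t) = exp (b / a * (t * a)) := by field_simp
    _ ≤ 1 + b / a * (exp (t * a) - 1) :=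
      exp_mul_le_one_add_mul_exp_sub_one (by positivity) ((div_le_one ha).2 hba) _
    _ ≤ 1 + k / a * (exp (t * a) - 1) := by gcongr

lemma logisticFlow_sub_div {a c h t : ℝ} (ha : a ≠ 0) (hc : c ≠ 0)
    (hQ : 1 + h * c / a * (exp (t * a) - 1) ≠ 0) :
    logisticFlow a c h t - a / c = (h - a / c) / (1 + h * c / a * (exp (t * a) - 1)) := by
  rw [logisticFlow, div_sub_div _ _ hQ hc, div_eq_div_iff (mul_ne_zero hQ hc) hQ]
  field_simp
  ring

theorem abs_logisticFlow_sub_div_le {a b c h t : ℝ} (hb : 0 < b) (hba : b ≤ a) (hc : 0 < c)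
    (hbh : b ≤ h * c) (ht : 0 ≤ t) :
    |logisticFlow a c h t - a / c| ≤ |h - a / c| * exp (-(b * t)) := by
  have hQ := exp_mul_le_one_add_div_mul_exp_sub_one hb hba hbh ht
  have hQpos := (exp_pos (b * t)).trans_le hQ
  rw [logisticFlow_sub_div (hb.trans_le hba).ne' hc.ne' hQpos.ne', abs_div, abs_of_pos hQpos,
    exp_neg, ← div_eq_mul_inv]
  gcongr

theorem stmt_4_general (r B C D : ℝ) (hC : 0 < C) (hD : 0 ≤ D)
    (hgrow : 0 < r * B - D) :
    ∀ n : ℕ, 1 ≤ n → ∀ h : ℝ, hstar r B C D 1 ≤ h → ∀ t : ℝ, 0 ≤ t →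
      |phi r B C D n h t - hstar r B C D n| ≤
        |h - hstar r B C D n| * Real.exp (-(C * hstar r B C D 1 / 2) * t) := by
  intro n hn h hh t ht
  have hrate : C * hstar r B C D 1 = r * B - D := by
    rw [hstar, Nat.cast_one, mul_one, mul_div_cancel₀ _ hC.ne']
  have hbn : r * B - D ≤ r * B * n - D := by
    have hrB : 0 ≤ r * B := by linarith
    have hn' : (1 : ℝ) ≤ n := by exact_mod_cast hn
    nlinarith
  have hbh : r * B - D ≤ h * C := by
    rw [← hrate, mul_comm]; gcongr
  rw [phi_eq_logisticFlow]
  calc |logisticFlow (r * B * n - D) C h t - hstar r B C D n|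
      ≤ |h - hstar r B C D n| * exp (-((r * B - D) * t)) :=
        abs_logisticFlow_sub_div_le hgrow hbn hC hbh ht
    _ ≤ _ := by rw [hrate]; gcongr; nlinarith

theorem stmt_4 (r B C D : ℝ) (hr : 0 < r) (hB : 0 < B) (hC : 0 < C) (hD : 0 ≤ D)
    (hgrow : 0 < r * B - D) :
    ∀ n : ℕ, 1 ≤ n → ∀ h : ℝ, hstar r B C D 1 ≤ h → ∀ t : ℝ, 0 ≤ t →
      |phi r B C D n h t - hstar r B C D n| ≤
        |h - hstar r B C D n| * Real.exp (-(C * hstar r B C D 1 / 2) * t) :=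
  stmt_4_general r B C D hC hD hgrow
end

section
/- Let b, c > 0, d ≥ 0, r, B, C > 0, D ≥ 0. Define V(n,h) = n + h/r on ℕ* × ℝ₊ and the generator action A V(n,h) = (h/r)(rBn - D - Ch) + bn - n(d + cn + Bh)·1_{n≥2}. Then there exist γ > 0, δ > 0, and a compact set K = {1,…,n₀} × [0,h₀] ⊂ ℕ* × ℝ₊ such that A V(n,h) ≤ -γ V(n,h) + δ·1_K(n,h) for all (n,h) ∈ ℕ* × ℝ₊. -/
set_option maxHeartbeats 1000000

lemma quad_bound (a e x : ℝ) (he : 0 < e) : a * x - e * x ^ 2 ≤ a ^ 2 / (4 * e) := by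
  have this : a ^ 2 / (4 * e) - (a * x - e * x ^ 2) = (a - 2 * e * x) ^ 2 / (4 * e) := by
    field_simp; ring
  rw [← sub_nonneg, this]
  positivity

theorem stmt_7 (b c d r B C D : ℝ) (hb : 0 < b) (hc : 0 < c) (hd : 0 ≤ d)
    (hr : 0 < r) (hB : 0 < B) (hC : 0 < C) (hD : 0 ≤ D) :
    ∃ γ : ℝ, 0 < γ ∧ ∃ δ : ℝ, 0 < δ ∧ ∃ n₀ : ℕ, ∃ h₀ : ℝ,
      ∀ n : ℕ, 1 ≤ n → ∀ h : ℝ, 0 ≤ h →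
        (h / r) * (r * B * n - D - C * h) + b * n
            - (n : ℝ) * (d + c * n + B * h) * (if 2 ≤ n then 1 else 0)
          ≤ -γ * ((n : ℝ) + h / r) + (if n ≤ n₀ ∧ h ≤ h₀ then δ else 0) := by
  have hCr : (0:ℝ) < C * r := mul_pos hC hr
  -- opaque constants
  obtain ⟨SP, hSP⟩ : ∃ x : ℝ, x = (b + 1) ^ 2 / (4 * c) := ⟨_, rfl⟩
  obtain ⟨SQ, hSQ⟩ : ∃ x : ℝ, x = 1 ^ 2 / (4 * (C * r)) := ⟨_, rfl⟩
  obtain ⟨T, hT⟩ : ∃ x : ℝ, x = (r * B + 1) ^ 2 / (4 * (C * r)) := ⟨_, rfl⟩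
  have hSPpos : 0 < SP := by rw [hSP]; positivity
  have hSQpos : 0 < SQ := by rw [hSQ]; positivity
  have hTpos : 0 < T := by rw [hT]; positivity
  have hPle : ∀ x : ℝ, (b + 1) * x - c * x ^ 2 ≤ SP := fun x => hSP ▸ quad_bound _ _ _ hc
  have hQle : ∀ x : ℝ, 1 * x - (C * r) * x ^ 2 ≤ SQ := fun x => hSQ ▸ quad_bound _ _ _ hCr
  have hTle : ∀ x : ℝ, (r * B + 1) * x - (C * r) * x ^ 2 ≤ T :=
    fun x => hT ▸ quad_bound _ _ _ hCr
  obtain ⟨u₀, hu₀⟩ : ∃ x : ℝ, x = (1 + SP + r * B + b + 2) / (C * r) + 1 := ⟨_, rfl⟩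
  have hu₀1 : 1 ≤ u₀ := by
    rw [hu₀]
    have : 0 ≤ (1 + SP + r * B + b + 2) / (C * r) := by positivity
    linarith
  have hCru₀ : 1 + SP + r * B + b + 2 ≤ C * r * u₀ := by
    rw [hu₀, mul_add, mul_one, mul_div_cancel₀ _ hCr.ne']
    linarith
  refine ⟨1, one_pos, SP + SQ + T + b + 1, by positivity,
    ⌈(b + 1 + SQ) / c⌉₊ + 1, r * u₀, ?_⟩
  have hceil : ∀ n : ℕ, ⌈(b + 1 + SQ) / c⌉₊ + 1 < n → b + 1 + SQ ≤ c * n := by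
    intro n hn
    have h1 : ((b + 1 + SQ) / c) ≤ (⌈(b + 1 + SQ) / c⌉₊ : ℝ) := Nat.le_ceil _
    have h2 : ((⌈(b + 1 + SQ) / c⌉₊ : ℝ)) ≤ (n : ℝ) := by
      exact_mod_cast Nat.le_of_lt (Nat.lt_of_succ_lt hn)
    have h3 : (b + 1 + SQ) / c ≤ (n : ℝ) := le_trans h1 h2
    rw [div_le_iff₀ hc] at h3
    linarith
  intro n hn h hh
  obtain ⟨u, huh, hu⟩ : ∃ u : ℝ, h = r * u ∧ 0 ≤ u :=
    ⟨h / r, by field_simp, by positivity⟩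
  rw [huh, mul_div_cancel_left₀ _ hr.ne']
  have hnR : (1 : ℝ) ≤ (n : ℝ) := by exact_mod_cast hn
  by_cases h2 : 2 ≤ n
  · rw [if_pos h2]
    have hn2R : (2 : ℝ) ≤ (n : ℝ) := by exact_mod_cast h2
    by_cases hK : n ≤ ⌈(b + 1 + SQ) / c⌉₊ + 1 ∧ r * u ≤ r * u₀
    · rw [if_pos hK]
      have h1 := hPle (n : ℝ)
      have h2 := hQle u
      have h3 : 0 ≤ D * u := mul_nonneg hD hu
      have h4 : 0 ≤ d * n := mul_nonneg hd (by positivity)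
      nlinarith
    · rw [if_neg hK]
      push_neg at hK
      by_cases hnn : ⌈(b + 1 + SQ) / c⌉₊ + 1 < n
      · -- large n
        have h5 := hceil n hnn
        have hPneg : (b + 1) * (n : ℝ) - c * (n : ℝ) ^ 2 ≤ -SQ := by
          nlinarith [mul_nonneg (by linarith : (0:ℝ) ≤ (n:ℝ) - 1)
            (by linarith : (0:ℝ) ≤ c * (n : ℝ) - (b + 1) - SQ)]
        have h2 := hQle u
        have h3 : 0 ≤ D * u := mul_nonneg hD hu
        have h4 : 0 ≤ d * n := mul_nonneg hd (by positivity)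
        nlinarith
      · -- large u
        push_neg at hnn
        have huu₀ : u₀ < u := by
          have := hK hnn
          exact lt_of_mul_lt_mul_left this hr.le
        have hu1 : 1 ≤ u := le_trans hu₀1 huu₀.le
        have hCru : 1 + SP ≤ C * r * u := by
          have : C * r * u₀ ≤ C * r * u := by nlinarith
          nlinarith [mul_pos hr hB]
        have hQneg : 1 * u - (C * r) * u ^ 2 ≤ -SP := by
          nlinarith [mul_nonneg hu (by linarith : (0:ℝ) ≤ C * r * u - 1 - SP),
            mul_nonneg hSPpos.le (by linarith : (0:ℝ) ≤ u - 1)]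
        have h1 := hPle (n : ℝ)
        have h3 : 0 ≤ D * u := mul_nonneg hD hu
        have h4 : 0 ≤ d * n := mul_nonneg hd (by positivity)
        nlinarith
  · -- n = 1
    have hn1 : n = 1 := by omega
    subst hn1
    rw [if_neg h2]
    push_cast
    simp only [true_and]
    by_cases hK : r * u ≤ r * u₀
    · rw [if_pos hK]
      have h1 := hTle u
      have h3 : 0 ≤ D * u := mul_nonneg hD hu
      nlinarith
    · rw [if_neg hK]
      push_neg at hK
      have huu₀ : u₀ < u := lt_of_mul_lt_mul_left hK hr.le
      have hu1 : 1 ≤ u := le_trans hu₀1 huu₀.le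
      have hCru : 1 + SP + r * B + b + 2 ≤ C * r * u := by
        have : C * r * u₀ ≤ C * r * u := by nlinarith
        linarith
      have h3 : 0 ≤ D * u := mul_nonneg hD hu
      have key : (r * B + 1) * u + b + 1 ≤ C * r * u ^ 2 := by
        nlinarith [mul_nonneg hu (by linarith : (0:ℝ) ≤ C * r * u - (r * B + 1) - (b + 1)),
          mul_nonneg (by linarith : (0:ℝ) ≤ b + 1) (by linarith : (0:ℝ) ≤ u - 1)]
      nlinarith
end

section
/- Let m ≤ n be integers with m, n ≥ 1, let r, B, C > 0, D ≥ 0, h > 0, t ≥ 0, with rBm - D ≠ 0 and rBn - D ≠ 0. Then φ_n(h,t) ≥ φ_m(h,t), where φ_k is the solution of the logistic ODE y' = y(rBk - D - Cy) with y(0) = h. -/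
open Real

lemma integral_exp_neg_mul {a : ℝ} (ha : a ≠ 0) (t : ℝ) :
    ∫ s in (0:ℝ)..t, exp (-(a * s)) = (1 - exp (-(a * t))) / a := by
  have h := intervalIntegral.integral_comp_mul_left exp (neg_ne_zero.mpr ha) (a := 0) (b := t)
  simp only [neg_mul, mul_zero, integral_exp, exp_zero, smul_eq_mul] at h
  rw [h]
  field_simp
  ring

lemma integral_exp_neg_mul_antitone {t : ℝ} (ht : 0 ≤ t) :
    Antitone fun a : ℝ => ∫ s in (0:ℝ)..t, exp (-(a * s)) := by
  intro a b hab
  have hcont (c : ℝ) : IntervalIntegrable (fun s => exp (-(c * s))) MeasureTheory.volume 0 t :=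
    (by fun_prop : Continuous fun s => exp (-(c * s))).intervalIntegrable _ _
  refine intervalIntegral.integral_mono_on ht (hcont b) (hcont a) fun s hs => ?_
  exact exp_le_exp.mpr (neg_le_neg (mul_le_mul_of_nonneg_right hab hs.1))

lemma exp_add_integral_exp_pos {c t : ℝ} (hc : 0 ≤ c) (ht : 0 ≤ t) (a : ℝ) :
    0 < exp (-(a * t)) + c * ∫ s in (0:ℝ)..t, exp (-(a * s)) := by
  have hint : 0 ≤ ∫ s in (0:ℝ)..t, exp (-(a * s)) :=
    intervalIntegral.integral_nonneg ht fun s _ => (exp_pos _).le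
  positivity

lemma exp_add_integral_exp_antitone {c t : ℝ} (hc : 0 ≤ c) (ht : 0 ≤ t) :
    Antitone fun a : ℝ => exp (-(a * t)) + c * ∫ s in (0:ℝ)..t, exp (-(a * s)) := by
  intro a b hab
  have hexp : exp (-(b * t)) ≤ exp (-(a * t)) :=
    exp_le_exp.mpr (neg_le_neg (mul_le_mul_of_nonneg_right hab ht))
  exact add_le_add hexp (mul_le_mul_of_nonneg_left (integral_exp_neg_mul_antitone ht hab) hc)

lemma phi_eq_div_exp_add_integral (r B C D : ℝ) (k : ℕ) (h t : ℝ) (hk : r * B * k - D ≠ 0) :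
    phi r B C D k h t = h / (exp (-((r * B * k - D) * t))
      + h * C * ∫ s in (0:ℝ)..t, exp (-((r * B * k - D) * s))) := by
  rw [integral_exp_neg_mul hk, phi]
  set a := r * B * k - D
  rw [show -(a * t) = -(t * a) by ring, exp_neg]
  field_simp

theorem stmt_14_general (r B C D : ℝ) (hr : 0 < r) (hB : 0 < B) (hC : 0 < C)
    (m n : ℕ) (hmn : m ≤ n)
    (ham : r * B * m - D ≠ 0) (han : r * B * n - D ≠ 0)
    (h t : ℝ) (hh : 0 < h) (ht : 0 ≤ t) :
    phi r B C D m h t ≤ phi r B C D n h t := by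
  have hrate : r * B * m - D ≤ r * B * n - D := by gcongr
  have hhC : 0 ≤ h * C := by positivity
  rw [phi_eq_div_exp_add_integral r B C D m h t ham, phi_eq_div_exp_add_integral r B C D n h t han]
  exact div_le_div_of_nonneg_left hh.le (exp_add_integral_exp_pos hhC ht _)
    (exp_add_integral_exp_antitone hhC ht hrate)

theorem stmt_14 (r B C D : ℝ) (hr : 0 < r) (hB : 0 < B) (hC : 0 < C) (hD : 0 ≤ D)
    (m n : ℕ) (hm : 1 ≤ m) (hmn : m ≤ n)
    (ham : r * B * m - D ≠ 0) (han : r * B * n - D ≠ 0)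
    (h t : ℝ) (hh : 0 < h) (ht : 0 ≤ t) :
    phi r B C D m h t ≤ phi r B C D n h t :=
  stmt_14_general r B C D hr hB hC m n hmn ham han h t hh ht
end
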